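/- arXiv:2212.04671 — 2 statements merged into one kernel-verified Lean document; each statement's English description precedes it below -/
import Mathlib

section
/- Let H and L be complex Hilbert spaces with H continuously embedded in L, and let a : H × H → ℂ be a continuous sesquilinear form such that (i) |Im(a(u,u))| ≥ k₁‖u‖_L² for all u ∈ H with k₁ > 0, and (ii) |Re(a(u,u))| ≥ k₂‖u‖_H² − k₃‖u‖_L² for all u ∈ H with k₂, k₃ > 0. Then there exists a constant C > 0, depending only on k₁, k₂, k₃, such that |a(u,u)| ≥ C‖u‖_H² for all u ∈ H. -/
/-- Lemma 2.1 (Sébelin et al.): coercivity of a sesquilinear form whose imaginary part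
controls the `L`-norm and whose real part is a Gårding-type bound. The constant `C`
depends only on `k₁, k₂, k₃`. -/
theorem stmt0 (k₁ k₂ k₃ : ℝ) (hk₁ : 0 < k₁) (hk₂ : 0 < k₂) (hk₃ : 0 < k₃) :
    ∃ C > 0, ∀ (H : Type) [NormedAddCommGroup H] [InnerProductSpace ℂ H] [CompleteSpace H]
      (L : Type) [NormedAddCommGroup L] [InnerProductSpace ℂ L] [CompleteSpace L]
      (ι : H →L[ℂ] L), Function.Injective ι →
      ∀ a : H →ₗ⋆[ℂ] H →ₗ[ℂ] ℂ, Continuous (fun p : H × H => a p.1 p.2) →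
        (∀ u : H, k₁ * ‖ι u‖ ^ 2 ≤ |(a u u).im|) →
        (∀ u : H, k₂ * ‖u‖ ^ 2 - k₃ * ‖ι u‖ ^ 2 ≤ |(a u u).re|) →
        ∀ u : H, C * ‖u‖ ^ 2 ≤ ‖a u u‖ := by
  refine ⟨k₁ * k₂ / (k₁ + k₃), by positivity, ?_⟩
  intro H _ _ _ L _ _ _ ι _ a _ h1 h2 u
  have hre : |(a u u).re| ≤ ‖a u u‖ := Complex.abs_re_le_norm _
  have him : |(a u u).im| ≤ ‖a u u‖ := Complex.abs_im_le_norm _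
  have h1' := h1 u
  have h2' := h2 u
  rw [div_mul_eq_mul_div, div_le_iff₀ (by linarith)]
  nlinarith [sq_nonneg ‖ι u‖, sq_nonneg ‖u‖]
end

section
/- Let 𝒴 = (0,1)² × ℝ, Y₀ ⊂ Y = (0,1)² × (−1/2,1/2) open with positive measure, ε₂, ω > 0, and A a constant real positive-definite 3×3 matrix. If v̂ ∈ ℍ(𝒴) satisfies ∫_𝒴 A∇_z v̂ · ∇_z v̂̄ dz − iω²ε₂∫_{Y₀} |v̂|² dz = 0, then ∇_z v̂ = 0 a.e. in 𝒴 and v̂ = 0 a.e. in Y₀; consequently v̂ = 0 in 𝒴. Hence the cell problem ∫_𝒴 A∇_z v·∇_zψ̄ dz − iω²ε₂∫_{Y₀} v ψ̄ dz = iε₂∫_{Y₀} u₁ ψ̄ dz for all ψ ∈ ℍ(𝒴) has at most one solution in ℍ(𝒴). -/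
noncomputable section
open MeasureTheory Set

/-- Points of `ℝ³` as functions `Fin 3 → ℝ`. -/
abbrev X3 : Type := Fin 3 → ℝ

/-- The continuous `ℝ`-linear map `ℝ³ → ℂ` associated with a (complex) gradient vector `g`. -/
noncomputable def gradCLM (g : Fin 3 → ℂ) : X3 →L[ℝ] ℂ :=
  ∑ i, g i • (Complex.ofRealCLM.comp (ContinuousLinearMap.proj i : X3 →L[ℝ] ℝ))

/-- The infinite cylinder `𝒴 = (0,1)² × ℝ`. -/
def cylY : Set X3 := {z | z 0 ∈ Ioo (0 : ℝ) 1 ∧ z 1 ∈ Ioo (0 : ℝ) 1}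

/-- The reference cell `Y = (0,1)² × (−1/2, 1/2)`. -/
def cellY : Set X3 := {z ∈ cylY | z 2 ∈ Ioo (-(1 / 2) : ℝ) (1 / 2)}

/-- Membership in `ℍ(𝒴)`: an in-plane periodic `H¹`-function on the cylinder with gradient
`Dψ`, finite `L²(Y)` norm and gradient in `L²(𝒴)`. -/
def MemHper (ψ : X3 → ℂ) (Dψ : X3 → Fin 3 → ℂ) : Prop :=
  (∀ z : X3, HasFDerivAt ψ (gradCLM (Dψ z)) z) ∧
    (∀ z : X3, ψ (z + Pi.single 0 1) = ψ z) ∧ (∀ z : X3, ψ (z + Pi.single 1 1) = ψ z) ∧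
    IntegrableOn (fun z => ‖ψ z‖ ^ 2) cellY ∧
    IntegrableOn (fun z => ∑ i, ‖Dψ z i‖ ^ 2) cylY

/-! The imaginary factor `i` in front of the `L²(Y₀)` term separates the two parts of the energy
identity: its real part is the (nonnegative) real part of `∫_𝒴 A∇v̂·∇v̂̄`, which forces
`∇v̂ = 0` a.e., and then the remaining term gives `∫_{Y₀} |v̂|² = 0`. A function with vanishing
gradient on the convex set `𝒴` is a.e. constant there (integrate along segments and use Fubini),
and the constant is `0` because `v̂` vanishes on `Y₀`, which has positive measure. Uniqueness for
the cell problem follows by testing the difference of two solutions against itself. -/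

section SesqForm

variable {ι : Type*} [Fintype ι]

def sesqForm (A : Matrix ι ι ℝ) (g h : ι → ℂ) : ℂ :=
  ∑ i, ∑ j, (A i j : ℂ) * g j * star (h i)

lemma sesqForm_sub_left (A : Matrix ι ι ℝ) (g₁ g₂ h : ι → ℂ) :
    sesqForm A (g₁ - g₂) h = sesqForm A g₁ h - sesqForm A g₂ h := by
  simp only [sesqForm, Pi.sub_apply, mul_sub, sub_mul, Finset.sum_sub_distrib]

lemma sesqForm_zero_left (A : Matrix ι ι ℝ) (h : ι → ℂ) : sesqForm A 0 h = 0 := by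
  simp [sesqForm]

lemma re_sesqForm_self (A : Matrix ι ι ℝ) (g : ι → ℂ) :
    (sesqForm A g g).re =
      (∑ i, ∑ j, A i j * (g i).re * (g j).re) + ∑ i, ∑ j, A i j * (g i).im * (g j).im := by
  simp only [sesqForm, Complex.re_sum, ← Finset.sum_add_distrib]
  refine Finset.sum_congr rfl fun i _ => Finset.sum_congr rfl fun j _ => ?_
  simp [Complex.mul_re, Complex.mul_im]
  ring

variable {A : Matrix ι ι ℝ} (hA : ∀ ξ : ι → ℝ, ξ ≠ 0 → 0 < ∑ i, ∑ j, A i j * ξ i * ξ j)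
include hA

lemma quadratic_nonneg (ξ : ι → ℝ) : 0 ≤ ∑ i, ∑ j, A i j * ξ i * ξ j := by
  rcases eq_or_ne ξ 0 with rfl | hξ
  · simp
  · exact (hA ξ hξ).le

lemma eq_zero_of_quadratic_nonpos {ξ : ι → ℝ} (h : ∑ i, ∑ j, A i j * ξ i * ξ j ≤ 0) : ξ = 0 :=
  by_contra fun hξ => (hA ξ hξ).not_ge h

lemma re_sesqForm_self_nonneg (g : ι → ℂ) : 0 ≤ (sesqForm A g g).re := by
  rw [re_sesqForm_self]
  exact add_nonneg (quadratic_nonneg hA _) (quadratic_nonneg hA _)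

lemma eq_zero_of_re_sesqForm_self_eq_zero {g : ι → ℂ} (h : (sesqForm A g g).re = 0) : g = 0 := by
  rw [re_sesqForm_self] at h
  have hre := eq_zero_of_quadratic_nonpos hA (ξ := fun i => (g i).re)
    (by linarith [quadratic_nonneg hA fun i => (g i).im])
  have him := eq_zero_of_quadratic_nonpos hA (ξ := fun i => (g i).im)
    (by linarith [quadratic_nonneg hA fun i => (g i).re])
  exact funext fun i => Complex.ext (congrFun hre i) (congrFun him i)

theorem ae_eq_zero_of_re_integral_sesqForm_self_eq_zero {α : Type*} [MeasurableSpace α]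
    {μ : Measure α} {g : α → ι → ℂ} (hint : Integrable (fun z => sesqForm A (g z) (g z)) μ)
    (h : (∫ z, sesqForm A (g z) (g z) ∂μ).re = 0) : ∀ᵐ z ∂μ, g z = 0 := by
  have hre : (fun z => (sesqForm A (g z) (g z)).re) =ᵐ[μ] 0 := by
    refine (integral_eq_zero_iff_of_nonneg (fun z => re_sesqForm_self_nonneg hA _) hint.re).1 ?_
    rw [← h]
    exact integral_re hint
  filter_upwards [hre] with z hz using eq_zero_of_re_sesqForm_self_eq_zero hA hz

end SesqForm

theorem eq_of_hasDerivAt_of_ae_eq_zero {F : Type*} [NormedAddCommGroup F] [NormedSpace ℝ F]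
    [CompleteSpace F] {g g' : ℝ → F} {a b : ℝ} (hab : a ≤ b)
    (hg : ∀ t ∈ Icc a b, HasDerivAt g (g' t) t) (hg' : ∀ᵐ t, t ∈ Icc a b → g' t = 0) :
    g b = g a := by
  have hzero : ∀ᵐ t, t ∈ uIoc a b → g' t = 0 := by
    filter_upwards [hg'] with t ht htab
    exact ht (Ioc_subset_Icc_self (uIoc_of_le hab ▸ htab))
  have hint : IntervalIntegrable g' volume a b :=
    (intervalIntegrable_const (c := (0 : F))).congr_ae
      ((ae_restrict_iff' measurableSet_uIoc).2 (hzero.mono fun t ht hmem => (ht hmem).symm))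
  rw [← sub_eq_zero, ← intervalIntegral.integral_eq_sub_of_hasDerivAt
    (fun t ht => hg t (uIcc_of_le hab ▸ ht)) hint, intervalIntegral.integral_congr_ae hzero]
  simp

theorem Convex.ae_eq_of_hasFDerivAt_ae_eq_zero {E F : Type*} [NormedAddCommGroup E]
    [NormedSpace ℝ E] [FiniteDimensional ℝ E] [MeasurableSpace E] [BorelSpace E]
    (μ : Measure E) [μ.IsAddHaarMeasure] [NormedAddCommGroup F] [NormedSpace ℝ F]
    [CompleteSpace F] {U : Set E} (hU : Convex ℝ U) {f : E → F} {f' : E → E →L[ℝ] F}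
    (hf : ∀ x ∈ U, HasFDerivAt f (f' x) x) (hf' : ∀ᵐ x ∂μ.restrict U, f' x = 0)
    {x : E} (hx : x ∈ U) :
    ∀ᵐ y ∂μ.restrict U, f y = f x := by
  obtain ⟨N, hNsub, hNmeas, hN⟩ := exists_measurable_superset_of_null
    (ae_iff.1 ((ae_restrict_iff'₀ (hU.nullMeasurableSet μ)).1 hf'))
  have hseg : ∀ t : ℝ, t ≠ 0 → ∀ᵐ y ∂μ, x + t • (y - x) ∉ N := fun t ht =>
    (((measurePreserving_add_left μ x).quasiMeasurePreserving.comp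
      (Measure.quasiMeasurePreserving_smul μ ht)).comp
        (measurePreserving_sub_right μ x).quasiMeasurePreserving).ae
      (measure_eq_zero_iff_ae_notMem.1 hN)
  have hswap : ∀ᵐ y ∂μ, ∀ᵐ t : ℝ, x + t • (y - x) ∉ N := by
    refine (Measure.ae_ae_comm ?_).1 ?_
    · exact hNmeas.compl.preimage (by fun_prop)
    · filter_upwards [measure_eq_zero_iff_ae_notMem.1 (measure_singleton (0 : ℝ))] with t ht
      exact hseg t ht
  filter_upwards [ae_restrict_of_ae hswap, ae_restrict_mem₀ (hU.nullMeasurableSet μ)]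
    with y hy hyU
  have hmem : ∀ t ∈ Icc (0 : ℝ) 1, x + t • (y - x) ∈ U := fun t ht => by
    simpa [smul_sub, sub_smul, add_sub, add_comm] using hU.add_smul_sub_mem hx hyU ht
  have hends := eq_of_hasDerivAt_of_ae_eq_zero (g := fun t : ℝ => f (x + t • (y - x)))
    (g' := fun t => f' (x + t • (y - x)) (y - x)) zero_le_one (fun t ht => ?_) ?_
  · simpa using hends
  · exact (hf _ (hmem t ht)).comp_hasDerivAt t
      (((hasDerivAt_id t).smul_const (y - x)).const_add x |>.congr_deriv (by simp))
  · filter_upwards [hy] with t ht htI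
    have hgood := not_not.1 fun h => ht (hNsub h)
    simp [hgood (hmem t htI)]

lemma gradCLM_apply (g : Fin 3 → ℂ) (x : X3) : gradCLM g x = ∑ i, g i * (x i : ℂ) := by
  simp [gradCLM]

lemma gradCLM_single (g : Fin 3 → ℂ) (i : Fin 3) : gradCLM g (Pi.single i 1) = g i := by
  rw [gradCLM_apply, Finset.sum_eq_single i] <;> simp +contextual

lemma gradCLM_sub (g h : Fin 3 → ℂ) : gradCLM (g - h) = gradCLM g - gradCLM h := by
  ext x
  simp [gradCLM_apply, sub_mul, Finset.sum_sub_distrib]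

lemma gradCLM_zero : gradCLM 0 = 0 := by
  ext x
  simp [gradCLM_apply]

lemma convex_cylY : Convex ℝ cylY :=
  ((convex_Ioo 0 1).linear_preimage (LinearMap.proj 0)).inter
    ((convex_Ioo 0 1).linear_preimage (LinearMap.proj 1))

lemma cellY_subset_cylY : cellY ⊆ cylY :=
  sep_subset _ _

namespace MemHper

variable {v ψ : X3 → ℂ} {Dv Dψ : X3 → Fin 3 → ℂ}

lemma continuous (h : MemHper ψ Dψ) : Continuous ψ :=
  continuous_iff_continuousAt.2 fun z => (h.1 z).continuousAt

lemma measurable_grad (h : MemHper ψ Dψ) (i : Fin 3) : Measurable fun z => Dψ z i := by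
  have hD : (fun z => Dψ z i) = fun z => fderiv ℝ ψ z (Pi.single i 1) :=
    funext fun z => by rw [(h.1 z).fderiv, gradCLM_single]
  rw [hD]
  exact measurable_fderiv_apply_const ℝ ψ _

lemma memLp (h : MemHper ψ Dψ) : MemLp ψ 2 (volume.restrict cellY) :=
  (memLp_two_iff_integrable_sq_norm h.continuous.aestronglyMeasurable).2 h.2.2.2.1

lemma memLp_grad (h : MemHper ψ Dψ) (i : Fin 3) :
    MemLp (fun z => Dψ z i) 2 (volume.restrict cylY) := by
  refine (memLp_two_iff_integrable_sq_norm (h.measurable_grad i).aestronglyMeasurable).2 ?_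
  refine h.2.2.2.2.mono' ((h.measurable_grad i).norm.pow_const 2).aestronglyMeasurable
    (Filter.Eventually.of_forall fun z => ?_)
  rw [Real.norm_of_nonneg (by positivity)]
  exact Finset.single_le_sum (f := fun j => ‖Dψ z j‖ ^ 2) (fun j _ => by positivity)
    (Finset.mem_univ i)

lemma sub (hv : MemHper v Dv) (hψ : MemHper ψ Dψ) : MemHper (v - ψ) (Dv - Dψ) := by
  refine ⟨fun z => ?_, fun z => ?_, fun z => ?_, ?_, ?_⟩
  · rw [Pi.sub_apply, gradCLM_sub]
    exact (hv.1 z).sub (hψ.1 z)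
  · simp [hv.2.1 z, hψ.2.1 z]
  · simp [hv.2.2.1 z, hψ.2.2.1 z]
  · exact (memLp_two_iff_integrable_sq_norm
      (hv.continuous.sub hψ.continuous).aestronglyMeasurable).1 (hv.memLp.sub hψ.memLp)
  · refine integrable_finsetSum _ fun i _ => ?_
    exact (memLp_two_iff_integrable_sq_norm
      ((hv.measurable_grad i).sub (hψ.measurable_grad i)).aestronglyMeasurable).1
      ((hv.memLp_grad i).sub (hψ.memLp_grad i))

lemma integrableOn_sesqForm (hv : MemHper v Dv) (hψ : MemHper ψ Dψ)
    (A : Matrix (Fin 3) (Fin 3) ℝ) :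
    IntegrableOn (fun z => sesqForm A (Dv z) (Dψ z)) cylY :=
  integrable_finsetSum _ fun i _ => integrable_finsetSum _ fun j _ =>
    ((hv.memLp_grad j).const_mul _).integrable_mul (hψ.memLp_grad i).star

lemma integrableOn_mul_star (hv : MemHper v Dv) (hψ : MemHper ψ Dψ) {s : Set X3}
    (hs : s ⊆ cellY) : IntegrableOn (fun z => v z * star (ψ z)) s :=
  IntegrableOn.mono_set (hv.memLp.integrable_mul hψ.memLp.star) hs

end MemHper

theorem ae_eq_zero_on_cylY {v : X3 → ℂ} {Dv : X3 → Fin 3 → ℂ}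
    (hd : ∀ z, HasFDerivAt v (gradCLM (Dv z)) z) (hgrad : ∀ᵐ z ∂(volume.restrict cylY), Dv z = 0)
    {Y₀ : Set X3} (hY₀open : IsOpen Y₀) (hY₀sub : Y₀ ⊆ cylY) (hY₀pos : 0 < volume Y₀)
    (hY₀ : ∀ᵐ z ∂(volume.restrict Y₀), v z = 0) : ∀ᵐ z ∂(volume.restrict cylY), v z = 0 := by
  have := ae_restrict_neBot.2 hY₀pos.ne'
  obtain ⟨x, hx0, hxY⟩ := (hY₀.and (ae_restrict_mem hY₀open.measurableSet)).exists
  filter_upwards [convex_cylY.ae_eq_of_hasFDerivAt_ae_eq_zero volume (fun z _ => hd z)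
    (hgrad.mono fun z hz => by rw [hz, gradCLM_zero]) (hY₀sub hxY)] with z hz
  rw [hz, hx0]

theorem MemHper.eq_zero_of_energy_eq_zero {v : X3 → ℂ} {Dv : X3 → Fin 3 → ℂ} (hv : MemHper v Dv)
    {A : Matrix (Fin 3) (Fin 3) ℝ} (hA : ∀ ξ : Fin 3 → ℝ, ξ ≠ 0 → 0 < ∑ i, ∑ j, A i j * ξ i * ξ j)
    {Y₀ : Set X3} (hY₀open : IsOpen Y₀) (hY₀sub : Y₀ ⊆ cellY) (hY₀pos : 0 < volume Y₀)
    {κ : ℂ} (hκre : κ.re = 0) (hκ : κ ≠ 0)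
    (h : (∫ z in cylY, sesqForm A (Dv z) (Dv z)) - κ * ∫ z in Y₀, ((‖v z‖ ^ 2 : ℝ) : ℂ) = 0) :
    (∀ᵐ z ∂(volume.restrict cylY), Dv z = 0) ∧ (∀ᵐ z ∂(volume.restrict Y₀), v z = 0) ∧
      (∀ᵐ z ∂(volume.restrict cylY), v z = 0) := by
  have hofReal : ∫ z in Y₀, ((‖v z‖ ^ 2 : ℝ) : ℂ) = ((∫ z in Y₀, ‖v z‖ ^ 2 : ℝ) : ℂ) :=
    integral_ofReal
  rw [hofReal, sub_eq_zero] at h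
  have hgrad : ∀ᵐ z ∂(volume.restrict cylY), Dv z = 0 :=
    ae_eq_zero_of_re_integral_sesqForm_self_eq_zero hA (hv.integrableOn_sesqForm hv A)
      (by simp [h, hκre])
  have hL2 : ∫ z in Y₀, ‖v z‖ ^ 2 = 0 := by
    rw [integral_eq_zero_of_ae (hgrad.mono fun z hz => by simp [hz, sesqForm_zero_left])] at h
    simpa [hκ] using h.symm
  have hY₀ : ∀ᵐ z ∂(volume.restrict Y₀), v z = 0 := by
    filter_upwards [(integral_eq_zero_iff_of_nonneg (fun z => by positivity)
      (hv.2.2.2.1.mono_set hY₀sub)).1 hL2] with z hz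
    simpa using hz
  exact ⟨hgrad, hY₀,
    ae_eq_zero_on_cylY hv.1 hgrad hY₀open (hY₀sub.trans cellY_subset_cylY) hY₀pos hY₀⟩

/-- `κ` stands for the paper's `iω²ε₂`. -/
def cellForm (A : Matrix (Fin 3) (Fin 3) ℝ) (κ : ℂ) (Y₀ : Set X3) (v : X3 → ℂ)
    (Dv : X3 → Fin 3 → ℂ) (ψ : X3 → ℂ) (Dψ : X3 → Fin 3 → ℂ) : ℂ :=
  (∫ z in cylY, sesqForm A (Dv z) (Dψ z)) - κ * ∫ z in Y₀, v z * star (ψ z)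

lemma cellForm_self (A : Matrix (Fin 3) (Fin 3) ℝ) (κ : ℂ) (Y₀ : Set X3) (v : X3 → ℂ)
    (Dv : X3 → Fin 3 → ℂ) :
    cellForm A κ Y₀ v Dv v Dv =
      (∫ z in cylY, sesqForm A (Dv z) (Dv z)) - κ * ∫ z in Y₀, ((‖v z‖ ^ 2 : ℝ) : ℂ) := by
  simp [cellForm, Complex.mul_conj, Complex.normSq_eq_norm_sq]

lemma cellForm_sub_left {A : Matrix (Fin 3) (Fin 3) ℝ} {κ : ℂ} {Y₀ : Set X3} (hY₀ : Y₀ ⊆ cellY)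
    {v₁ v₂ ψ : X3 → ℂ} {Dv₁ Dv₂ Dψ : X3 → Fin 3 → ℂ} (h₁ : MemHper v₁ Dv₁) (h₂ : MemHper v₂ Dv₂)
    (hψ : MemHper ψ Dψ) :
    cellForm A κ Y₀ (v₁ - v₂) (Dv₁ - Dv₂) ψ Dψ =
      cellForm A κ Y₀ v₁ Dv₁ ψ Dψ - cellForm A κ Y₀ v₂ Dv₂ ψ Dψ := by
  simp only [cellForm, Pi.sub_apply, sesqForm_sub_left, sub_mul]
  rw [integral_sub (h₁.integrableOn_sesqForm hψ A) (h₂.integrableOn_sesqForm hψ A),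
    integral_sub (h₁.integrableOn_mul_star hψ hY₀) (h₂.integrableOn_mul_star hψ hY₀)]
  ring

/-- If `v̂ ∈ ℍ(𝒴)` satisfies `∫_𝒴 A∇v̂·∇v̂̄ − iω²ε₂∫_{Y₀}|v̂|² = 0` then `∇v̂ = 0` a.e. in `𝒴`,
`v̂ = 0` a.e. in `Y₀`, and consequently `v̂ = 0` a.e. in `𝒴`; hence the cell problem
`∫_𝒴 A∇v·∇ψ̄ − iω²ε₂∫_{Y₀} v ψ̄ = iε₂∫_{Y₀} u₁ψ̄` for all `ψ ∈ ℍ(𝒴)` has at most one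
solution in `ℍ(𝒴)`. -/
theorem stmt15 (Y₀ : Set X3) (hY₀open : IsOpen Y₀) (hY₀sub : Y₀ ⊆ cellY)
    (hY₀pos : 0 < volume Y₀)
    (ω ε₂ : ℝ) (hω : 0 < ω) (hε₂ : 0 < ε₂)
    (A : Matrix (Fin 3) (Fin 3) ℝ)
    (hApos : ∀ ξ : Fin 3 → ℝ, ξ ≠ 0 → 0 < ∑ i, ∑ j, A i j * ξ i * ξ j)
    (u₁ : X3 → ℂ) :
    (∀ (vh : X3 → ℂ) (Dvh : X3 → Fin 3 → ℂ), MemHper vh Dvh →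
      (∫ z in cylY, ∑ i, ∑ j, (A i j : ℂ) * Dvh z j * star (Dvh z i)) -
          Complex.I * (ω : ℂ) ^ 2 * (ε₂ : ℂ) *
            (∫ z in Y₀, ((‖vh z‖ ^ 2 : ℝ) : ℂ)) = 0 →
        (∀ᵐ z ∂(volume.restrict cylY), Dvh z = 0) ∧
        (∀ᵐ z ∂(volume.restrict Y₀), vh z = 0) ∧
        (∀ᵐ z ∂(volume.restrict cylY), vh z = 0)) ∧
    (∀ (v₁ : X3 → ℂ) (Dv₁ : X3 → Fin 3 → ℂ) (v₂ : X3 → ℂ) (Dv₂ : X3 → Fin 3 → ℂ),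
      MemHper v₁ Dv₁ → MemHper v₂ Dv₂ →
      (∀ (ψ : X3 → ℂ) (Dψ : X3 → Fin 3 → ℂ), MemHper ψ Dψ →
        (∫ z in cylY, ∑ i, ∑ j, (A i j : ℂ) * Dv₁ z j * star (Dψ z i)) -
            Complex.I * (ω : ℂ) ^ 2 * (ε₂ : ℂ) * (∫ z in Y₀, v₁ z * star (ψ z)) =
          Complex.I * (ε₂ : ℂ) * ∫ z in Y₀, u₁ z * star (ψ z)) →
      (∀ (ψ : X3 → ℂ) (Dψ : X3 → Fin 3 → ℂ), MemHper ψ Dψ →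
        (∫ z in cylY, ∑ i, ∑ j, (A i j : ℂ) * Dv₂ z j * star (Dψ z i)) -
            Complex.I * (ω : ℂ) ^ 2 * (ε₂ : ℂ) * (∫ z in Y₀, v₂ z * star (ψ z)) =
          Complex.I * (ε₂ : ℂ) * ∫ z in Y₀, u₁ z * star (ψ z)) →
      ∀ᵐ z ∂(volume.restrict cylY), v₁ z = v₂ z) := by
  have hκre : (Complex.I * (ω : ℂ) ^ 2 * (ε₂ : ℂ)).re = 0 := by simp [← Complex.ofReal_pow]
  have hκ : Complex.I * (ω : ℂ) ^ 2 * (ε₂ : ℂ) ≠ 0 := by simp [hω.ne', hε₂.ne']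
  have henergy := fun v Dv (hv : MemHper v Dv) =>
    hv.eq_zero_of_energy_eq_zero hApos hY₀open hY₀sub hY₀pos hκre hκ
  refine ⟨henergy, fun v₁ Dv₁ v₂ Dv₂ h₁ h₂ hsol₁ hsol₂ => ?_⟩
  have hv := h₁.sub h₂
  have hself : cellForm A (Complex.I * (ω : ℂ) ^ 2 * (ε₂ : ℂ)) Y₀
      (v₁ - v₂) (Dv₁ - Dv₂) (v₁ - v₂) (Dv₁ - Dv₂) = 0 := by
    rw [cellForm_sub_left hY₀sub h₁ h₂ hv, sub_eq_zero]
    exact (hsol₁ _ _ hv).trans (hsol₂ _ _ hv).symm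
  rw [cellForm_self] at hself
  filter_upwards [(henergy _ _ hv hself).2.2] with z hz using sub_eq_zero.1 hz
end
end
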